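/- Let f be a quasiperiodically forced circle homeomorphism over an irrational ω with lift F whose fibered rotation number is ρ. Fix ε > 0 and an integer q ≥ 1, and set A := {θ ∈ T¹ : (F_ε)^q_θ(x) ≥ F^q_θ(x) + 1 for all x ∈ ℝ} (a closed subset of T¹). Then for all θ ∈ T¹, x ∈ ℝ and n ∈ ℕ one has (F_ε)^{nq}_θ(x) ≥ F^{nq}_θ(x) + #{0 ≤ i < n : θ + iqω ∈ A}. Consequently, if F_ε has fibered rotation number ρ₊ and λ denotes the Haar probability measure on T¹, then ρ₊ ≥ ρ + λ(A)/q. -/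

import Mathlib

/-!
Cut an orbit segment of length `n q` into `n` blocks of length `q`. On each block the perturbed
lift `G = F + ε` moves points at least as far as `F`, and at least one unit further when the
block starts in `A`. Since fiber maps are monotone and commute with integer translations, these
integer gains add up: `G^{nq} ≥ F^{nq} + #visits to A`. After dividing by `n`, the visit counts
average over `θ` to `λ(A)` by rotation invariance of Haar measure, while
`(G^{nq} - F^{nq}) / n` is bounded by `q ⌈ε⌉` and tends to `q (ρ₊ - ρ)` pointwise; dominated
convergence gives `λ(A) ≤ q (ρ₊ - ρ)`.
-/

open Filter Topology MeasureTheory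
open scoped Classical
open scoped ENNReal

noncomputable section

/-- The circle `T¹ = ℝ/ℤ`. -/
abbrev T1 := AddCircle (1 : ℝ)

/-- Fiberwise iterate of the skew product: `fiberIter ω F n θ x = F^n_θ(x)`. -/
def fiberIter (ω : ℝ) (F : T1 → ℝ → ℝ) : ℕ → T1 → ℝ → ℝ
  | 0, _, x => x
  | n + 1, θ, x => fiberIter ω F n (θ + (ω : T1)) (F θ x)

/-- `F` is (the fiber part of) a lift of a quasiperiodically forced circle homeomorphism
over `ω`: `F(θ,x) = (θ+ω, F_θ(x))`, each `F_θ` a strictly increasing homeomorphism of `ℝ`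
commuting with `x ↦ x+1`. -/
structure IsQpfLift (ω : ℝ) (F : T1 → ℝ → ℝ) : Prop where
  cont : Continuous fun p : T1 × ℝ => F p.1 p.2
  mono : ∀ θ, StrictMono (F θ)
  surj : ∀ θ, Function.Surjective (F θ)
  per  : ∀ θ x, F θ (x + 1) = F θ x + 1

/-- `ρ` is the fibered rotation number of the lift `F`. -/
def HasRotNum (ω : ℝ) (F : T1 → ℝ → ℝ) (ρ : ℝ) : Prop :=
  ∀ θ x, Tendsto (fun n : ℕ => (fiberIter ω F n θ x - x) / n) atTop (𝓝 ρ)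

namespace fiberIter

variable {ω : ℝ} {F G : T1 → ℝ → ℝ}

lemma succ (n : ℕ) (θ : T1) (x : ℝ) :
    fiberIter ω F (n + 1) θ x = fiberIter ω F n (θ + (ω : T1)) (F θ x) := rfl

lemma add (m n : ℕ) (θ : T1) (x : ℝ) :
    fiberIter ω F (m + n) θ x = fiberIter ω F n (θ + m • (ω : T1)) (fiberIter ω F m θ x) := by
  induction m generalizing θ x with
  | zero => simp [fiberIter]
  | succ m ih =>
    rw [Nat.add_right_comm, succ, ih, succ, succ_nsmul', add_assoc]

lemma monotone (hF : ∀ θ, Monotone (F θ)) (n : ℕ) (θ : T1) : Monotone (fiberIter ω F n θ) := by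
  induction n generalizing θ with
  | zero => exact monotone_id
  | succ n ih => exact fun a b hab => ih _ (hF θ hab)

lemma add_one (hF₁ : ∀ θ x, F θ (x + 1) = F θ x + 1) (n : ℕ) (θ : T1) (x : ℝ) :
    fiberIter ω F n θ (x + 1) = fiberIter ω F n θ x + 1 := by
  induction n generalizing θ x with
  | zero => rfl
  | succ n ih => rw [succ, succ, hF₁, ih]

lemma add_natCast (hF₁ : ∀ θ x, F θ (x + 1) = F θ x + 1) (n : ℕ) (θ : T1) (x : ℝ) (m : ℕ) :
    fiberIter ω F n θ (x + m) = fiberIter ω F n θ x + m := by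
  induction m with
  | zero => simp
  | succ m ih => rw [Nat.cast_succ, ← add_assoc, add_one hF₁, ih, add_assoc]

lemma le_of_forall_le (hG : ∀ θ, Monotone (G θ)) (hFG : ∀ θ x, F θ x ≤ G θ x)
    (n : ℕ) (θ : T1) (x : ℝ) : fiberIter ω F n θ x ≤ fiberIter ω G n θ x := by
  induction n generalizing θ x with
  | zero => rfl
  | succ n ih => exact (ih _ _).trans (monotone hG n _ (hFG θ x))

lemma add_const_natCast (hF₁ : ∀ θ x, F θ (x + 1) = F θ x + 1) (k n : ℕ) (θ : T1) (x : ℝ) :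
    fiberIter ω (fun θ x => F θ x + k) n θ x = fiberIter ω F n θ x + n * k := by
  induction n generalizing θ x with
  | zero => simp [fiberIter]
  | succ n ih => rw [succ, succ, ih, add_natCast hF₁]; push_cast; ring

lemma le_add_mul (hF : ∀ θ, Monotone (F θ)) (hF₁ : ∀ θ x, F θ (x + 1) = F θ x + 1) {k : ℕ}
    (hGF : ∀ θ x, G θ x ≤ F θ x + k) (n : ℕ) (θ : T1) (x : ℝ) :
    fiberIter ω G n θ x ≤ fiberIter ω F n θ x + n * k := by
  rw [← add_const_natCast hF₁]
  exact le_of_forall_le (fun θ _ _ h => add_le_add_left (hF θ h) _) hGF n θ x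

lemma continuous (hF : Continuous fun p : T1 × ℝ => F p.1 p.2) (n : ℕ) :
    Continuous fun p : T1 × ℝ => fiberIter ω F n p.1 p.2 := by
  induction n with
  | zero => exact continuous_snd
  | succ n ih => exact ih.comp ((continuous_fst.add continuous_const).prodMk hF)

lemma continuous_apply (hF : Continuous fun p : T1 × ℝ => F p.1 p.2) (n : ℕ) (x : ℝ) :
    Continuous fun θ => fiberIter ω F n θ x :=
  (continuous hF n).comp (continuous_id.prodMk continuous_const)

end fiberIter

lemma IsQpfLift.add_const {ω : ℝ} {F : T1 → ℝ → ℝ} (hF : IsQpfLift ω F) (ε : ℝ) :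
    IsQpfLift ω fun θ x => F θ x + ε where
  cont := hF.cont.add continuous_const
  mono θ := (hF.mono θ).add_const ε
  surj θ y := (hF.surj θ (y - ε)).imp fun x hx => by simp [hx]
  per θ x := by rw [hF.per]; ring

lemma HasRotNum.tendsto_fiberIter_mul_div {ω ρ : ℝ} {F : T1 → ℝ → ℝ} (hρ : HasRotNum ω F ρ)
    {q : ℕ} (hq : 0 < q) (θ : T1) :
    Tendsto (fun n : ℕ => fiberIter ω F (n * q) θ 0 / n) atTop (𝓝 (q * ρ)) := by
  have hnq : Tendsto (fun n : ℕ => n * q) atTop atTop := by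
    simpa [mul_comm] using tendsto_id.nsmul_atTop hq (α := ℕ)
  refine (((hρ θ 0).comp hnq).const_mul (q : ℝ)).congr' ?_
  filter_upwards [eventually_ne_atTop 0] with n hn
  have : (q : ℝ) ≠ 0 := by positivity
  simp only [Function.comp, sub_zero, Nat.cast_mul]
  field_simp

/-- `ℕ`-valued, so that the lift property `F θ (x + m) = F θ x + m` applies to it. -/
def visitCount (A : Set T1) (α : T1) (n : ℕ) (θ : T1) : ℕ :=
  ∑ i ∈ Finset.range n, if θ + i • α ∈ A then 1 else 0

lemma visitCount_succ (A : Set T1) (α : T1) (n : ℕ) (θ : T1) :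
    visitCount A α (n + 1) θ = visitCount A α n θ + if θ + n • α ∈ A then 1 else 0 :=
  Finset.sum_range_succ _ _

lemma visitCount_cast (A : Set T1) (α : T1) (n : ℕ) (θ : T1) :
    (visitCount A α n θ : ℝ) = ∑ i ∈ Finset.range n, A.indicator 1 (θ + i • α) := by
  simp [visitCount, Set.indicator_apply]

lemma integrable_visitCount {A : Set T1} (hA : MeasurableSet A) (α : T1) (n : ℕ) :
    Integrable (fun θ => (visitCount A α n θ : ℝ)) := by
  simp only [visitCount_cast]
  exact integrable_finsetSum _ fun i _ => ((integrable_const 1).indicator hA).comp_add_right _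

lemma integral_visitCount {A : Set T1} (hA : MeasurableSet A) (α : T1) (n : ℕ) :
    ∫ θ, (visitCount A α n θ : ℝ) = n * (volume A).toReal := by
  simp only [visitCount_cast]
  rw [integral_finsetSum _ fun i _ => ((integrable_const 1).indicator hA).comp_add_right _]
  simp [integral_add_right_eq_self (fun θ => A.indicator (1 : T1 → ℝ) θ),
    integral_indicator_one hA, measureReal_def]

lemma fiberIter_add_visitCount_le {ω : ℝ} {F G : T1 → ℝ → ℝ}
    (hG : ∀ θ, Monotone (G θ)) (hG₁ : ∀ θ x, G θ (x + 1) = G θ x + 1)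
    (hFG : ∀ θ x, F θ x ≤ G θ x) {q : ℕ} {A : Set T1}
    (hA : ∀ θ ∈ A, ∀ x, fiberIter ω F q θ x + 1 ≤ fiberIter ω G q θ x)
    (θ : T1) (x : ℝ) (n : ℕ) :
    fiberIter ω F (n * q) θ x + visitCount A (q • (ω : T1)) n θ ≤
      fiberIter ω G (n * q) θ x := by
  induction n with
  | zero => simp [fiberIter, visitCount]
  | succ n ih =>
    set ψ := θ + n • q • (ω : T1)
    set y := fiberIter ω F (n * q) θ x
    have hstep : fiberIter ω F q ψ y + (if ψ ∈ A then 1 else 0 : ℕ) ≤ fiberIter ω G q ψ y := by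
      split_ifs with hψ
      · exact_mod_cast hA ψ hψ y
      · simpa using fiberIter.le_of_forall_le hG hFG q ψ y
    have hmono := fiberIter.monotone (ω := ω) hG q ψ ih
    rw [fiberIter.add_natCast hG₁] at hmono
    rw [Nat.succ_mul, fiberIter.add, fiberIter.add, mul_nsmul', visitCount_succ, Nat.cast_add]
    linarith

lemma norm_fiberIter_sub_div_le {ω : ℝ} {F G : T1 → ℝ → ℝ} (hF : IsQpfLift ω F)
    (hG : IsQpfLift ω G) (hFG : ∀ θ x, F θ x ≤ G θ x) {k : ℕ} (hGF : ∀ θ x, G θ x ≤ F θ x + k)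
    (q n : ℕ) (θ : T1) (x : ℝ) :
    ‖(fiberIter ω G (n * q) θ x - fiberIter ω F (n * q) θ x) / n‖ ≤ q * k := by
  have hlow := fiberIter.le_of_forall_le (ω := ω) (fun θ => (hG.mono θ).monotone) hFG (n * q) θ x
  have hup :=
    fiberIter.le_add_mul (ω := ω) (fun θ => (hF.mono θ).monotone) hF.per hGF (n * q) θ x
  rw [Real.norm_eq_abs, abs_of_nonneg (div_nonneg (sub_nonneg.2 hlow) n.cast_nonneg)]
  rcases n.eq_zero_or_pos with rfl | hn
  · simp only [Nat.cast_zero, div_zero]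
    positivity
  · rw [div_le_iff₀ (by positivity)]
    push_cast at hup
    linarith

instance : IsProbabilityMeasure (volume : Measure T1) := ⟨by simp [AddCircle.measure_univ]⟩

lemma volume_le_mul_sub_of_hasRotNum {ω ρ ρ' : ℝ} {F G : T1 → ℝ → ℝ} (hF : IsQpfLift ω F)
    (hG : IsQpfLift ω G) (hFG : ∀ θ x, F θ x ≤ G θ x) {k : ℕ} (hGF : ∀ θ x, G θ x ≤ F θ x + k)
    (hρ : HasRotNum ω F ρ) (hρ' : HasRotNum ω G ρ') {q : ℕ} (hq : 0 < q) {A : Set T1}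
    (hAm : MeasurableSet A) (hA : ∀ θ ∈ A, ∀ x, fiberIter ω F q θ x + 1 ≤ fiberIter ω G q θ x) :
    (volume A).toReal ≤ q * (ρ' - ρ) := by
  set u : ℕ → T1 → ℝ := fun n θ => (fiberIter ω G (n * q) θ 0 - fiberIter ω F (n * q) θ 0) / n
  have hu_meas : ∀ n, AEStronglyMeasurable (u n) := fun n =>
    ((fiberIter.continuous_apply hG.cont _ 0).sub
      (fiberIter.continuous_apply hF.cont _ 0)).div_const _ |>.aestronglyMeasurable
  have hu_bound : ∀ n θ, ‖u n θ‖ ≤ q * k := fun n θ =>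
    norm_fiberIter_sub_div_le hF hG hFG hGF q n θ 0
  have hu_lim : ∀ θ, Tendsto (u · θ) atTop (𝓝 (q * (ρ' - ρ))) := fun θ => by
    simpa only [u, sub_div, mul_sub] using
      (hρ'.tendsto_fiberIter_mul_div hq θ).sub (hρ.tendsto_fiberIter_mul_div hq θ)
  have hu_int : Tendsto (fun n => ∫ θ, u n θ) atTop (𝓝 (q * (ρ' - ρ))) := by
    simpa using tendsto_integral_of_dominated_convergence (fun _ => (q * k : ℝ)) hu_meas
      (integrable_const _) (fun n => .of_forall (hu_bound n)) (.of_forall hu_lim)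
  refine ge_of_tendsto hu_int ((eventually_ne_atTop 0).mono fun n hn => ?_)
  have hvisit : ∀ θ, (visitCount A (q • (ω : T1)) n θ : ℝ) / n ≤ u n θ := fun θ => by
    have := fiberIter_add_visitCount_le (fun θ => (hG.mono θ).monotone) hG.per hFG hA θ 0 n
    exact div_le_div_of_nonneg_right (by linarith) n.cast_nonneg
  calc (volume A).toReal = ∫ θ, (visitCount A (q • (ω : T1)) n θ : ℝ) / n := by
        rw [integral_div, integral_visitCount hAm]
        field_simp
    _ ≤ ∫ θ, u n θ := integral_mono ((integrable_visitCount hAm _ n).div_const _)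
        (.of_bound (hu_meas n) _ (.of_forall (hu_bound n))) hvisit

lemma isClosed_setOf_forall_fiberIter_add_one_le {ω : ℝ} {F G : T1 → ℝ → ℝ}
    (hF : Continuous fun p : T1 × ℝ => F p.1 p.2) (hG : Continuous fun p : T1 × ℝ => G p.1 p.2)
    (q : ℕ) : IsClosed {θ | ∀ x, fiberIter ω F q θ x + 1 ≤ fiberIter ω G q θ x} := by
  simp only [Set.ofPred_forall]
  exact isClosed_iInter fun x => isClosed_le
    ((fiberIter.continuous_apply hF q x).add continuous_const) (fiberIter.continuous_apply hG q x)

theorem perturbed_iterates_gain_general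
    (ω : ℝ)
    (F : T1 → ℝ → ℝ) (hF : IsQpfLift ω F)
    (ρ : ℝ) (hρ : HasRotNum ω F ρ)
    (ε : ℝ) (hε : 0 < ε) (q : ℕ) (hq : 1 ≤ q)
    (A : Set T1)
    (hA : A = {θ : T1 | ∀ x : ℝ,
      fiberIter ω F q θ x + 1 ≤ fiberIter ω (fun θ x => F θ x + ε) q θ x}) :
    (∀ (θ : T1) (x : ℝ) (n : ℕ),
      fiberIter ω F (n * q) θ x +
        (∑ i ∈ Finset.range n, if θ + (i * q) • (ω : T1) ∈ A then (1 : ℝ) else 0) ≤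
      fiberIter ω (fun θ x => F θ x + ε) (n * q) θ x) ∧
    (∀ ρp : ℝ, HasRotNum ω (fun θ x => F θ x + ε) ρp →
      ρ + (volume A).toReal / (q : ℝ) ≤ ρp) := by
  have hFε := hF.add_const ε
  have hle : ∀ θ x, F θ x ≤ F θ x + ε := fun θ x => le_add_of_nonneg_right hε.le
  have hgain : ∀ θ ∈ A, ∀ x, fiberIter ω F q θ x + 1 ≤ fiberIter ω (fun θ x => F θ x + ε) q θ x :=
    hA ▸ fun θ hθ => hθ
  refine ⟨fun θ x n => ?_, fun ρp hρp => ?_⟩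
  · have := fiberIter_add_visitCount_le (fun θ => (hFε.mono θ).monotone) hFε.per hle hgain θ x n
    simpa only [visitCount, Nat.cast_sum, Nat.cast_ite, Nat.cast_one, Nat.cast_zero,
      ← mul_nsmul'] using this
  · have hAm : MeasurableSet A := hA ▸ (isClosed_setOf_forall_fiberIter_add_one_le hF.cont
      hFε.cont q).measurableSet
    have hGF : ∀ θ x, F θ x + ε ≤ F θ x + ⌈ε⌉₊ := fun θ x => by gcongr; exact Nat.le_ceil ε
    have := volume_le_mul_sub_of_hasRotNum hF hFε hle hGF hρ hρp hq hAm hgain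
    linarith [(div_le_iff₀' (by positivity : (0 : ℝ) < q)).2 this]

/-- key estimate in Lemma 3.2: the perturbed iterates gain at least one
unit over the unperturbed ones each time the base point visits the set `A`, and hence
the perturbed rotation number gains at least `λ(A)/q`. -/
theorem perturbed_iterates_gain
    (ω : ℝ) (hω : Irrational ω)
    (F : T1 → ℝ → ℝ) (hF : IsQpfLift ω F)
    (ρ : ℝ) (hρ : HasRotNum ω F ρ)
    (ε : ℝ) (hε : 0 < ε) (q : ℕ) (hq : 1 ≤ q)
    (A : Set T1)
    (hA : A = {θ : T1 | ∀ x : ℝ,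
      fiberIter ω F q θ x + 1 ≤ fiberIter ω (fun θ x => F θ x + ε) q θ x}) :
    (∀ (θ : T1) (x : ℝ) (n : ℕ),
      fiberIter ω F (n * q) θ x +
        (∑ i ∈ Finset.range n, if θ + (i * q) • (ω : T1) ∈ A then (1 : ℝ) else 0) ≤
      fiberIter ω (fun θ x => F θ x + ε) (n * q) θ x) ∧
    (∀ ρp : ℝ, HasRotNum ω (fun θ x => F θ x + ε) ρp →
      ρ + (volume A).toReal / (q : ℝ) ≤ ρp) :=
  perturbed_iterates_gain_general ω F hF ρ hρ ε hε q hq A hA
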